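/- arXiv:2009.13404 — 3 statements merged into one kernel-verified Lean document; each statement's English description precedes it below -/
import Mathlib

section
/- (Proposition 1, uniqueness direction.) Let F be a CDF-type function with inverse G. Let μ₀₀, μ₀₁, μ₁₀ ∈ ℝ and σ₀₀, σ₀₁, σ₁₀ > 0. Suppose m ∈ ℝ and s > 0 satisfy the distributional parallel trends condition: for every v ∈ (0,1), F((m + s·G(v) − μ₁₀)/σ₁₀) = F((μ₀₁ + σ₀₁·G(v) − μ₀₀)/σ₀₀). Then m and s are uniquely determined: m = μ₁₀ + (μ₀₁ − μ₀₀)·σ₁₀/σ₀₀ and s = σ₁₀·σ₀₁/σ₀₀. -/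
open Filter Set

/-- **Proposition 1, uniqueness direction.** For a CDF-type function
`F` with inverse `G`, if `m ∈ ℝ` and `s > 0` satisfy the distributional parallel
trends condition `F ((m + s * G v - μ₁₀)/σ₁₀) = F ((μ₀₁ + σ₀₁ * G v - μ₀₀)/σ₀₀)`
for all `v ∈ (0,1)`, then `m = μ₁₀ + (μ₀₁ - μ₀₀) * σ₁₀ / σ₀₀` and
`s = σ₁₀ * σ₀₁ / σ₀₀`. -/
theorem counterfactual_params_unique
    (F G : ℝ → ℝ)
    (hFcont : Continuous F)
    (hFmono : StrictMono F)
    (hFbot : Tendsto F atBot (nhds 0))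
    (hFtop : Tendsto F atTop (nhds 1))
    (hGF : ∀ y : ℝ, G (F y) = y)
    (hFG : ∀ v ∈ Ioo (0 : ℝ) 1, F (G v) = v)
    (μ₀₀ μ₀₁ μ₁₀ σ₀₀ σ₀₁ σ₁₀ : ℝ)
    (hσ₀₀ : 0 < σ₀₀) (hσ₀₁ : 0 < σ₀₁) (hσ₁₀ : 0 < σ₁₀)
    (m s : ℝ) (hs : 0 < s)
    (hdpt : ∀ v ∈ Ioo (0 : ℝ) 1,
      F ((m + s * G v - μ₁₀) / σ₁₀) = F ((μ₀₁ + σ₀₁ * G v - μ₀₀) / σ₀₀)) :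
    m = μ₁₀ + (μ₀₁ - μ₀₀) * σ₁₀ / σ₀₀ ∧ s = σ₁₀ * σ₀₁ / σ₀₀ := by
  have hmem : ∀ x : ℝ, F x ∈ Ioo (0 : ℝ) 1 := by
    intro x
    constructor
    · have h1 : (0 : ℝ) ≤ F (x - 1) :=
        le_of_tendsto hFbot (Filter.eventually_atBot.2 ⟨x - 1, fun y hy => (hFmono.monotone hy)⟩)
      exact lt_of_le_of_lt h1 (hFmono (by linarith))
    · have h1 : F (x + 1) ≤ 1 :=
        ge_of_tendsto hFtop (Filter.eventually_atTop.2 ⟨x + 1, fun y hy => hFmono.monotone hy⟩)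
      exact lt_of_lt_of_le (hFmono (by linarith)) h1
  have key : ∀ x : ℝ, (m + s * x - μ₁₀) / σ₁₀ = (μ₀₁ + σ₀₁ * x - μ₀₀) / σ₀₀ := by
    intro x
    have := hdpt (F x) (hmem x)
    rw [hGF x] at this
    exact hFmono.injective this
  have h0 := key 0
  have h1 := key 1
  rw [div_eq_div_iff (ne_of_gt hσ₁₀) (ne_of_gt hσ₀₀)] at h0 h1
  constructor
  · field_simp; nlinarith [h0, h1]
  · field_simp; nlinarith [h0, h1]
end

section
/- (Lemma A.3: invariance of the identified counterfactual distribution under the choice of cutoffs, three-category case.) Let F be a CDF-type function. Let two parameterizations be given: cutoffs κ₁ < κ₂ with parameters (μ_{dt}, σ_{dt}), σ_{dt} > 0, and cutoffs κ'₁ < κ'₂ with parameters (μ'_{dt}, σ'_{dt}), σ'_{dt} > 0, for (d,t) ∈ {(0,0), (0,1), (1,0)}. Assume both parameterizations induce the same observed category probabilities: F((κ_j − μ_{dt})/σ_{dt}) = F((κ'_j − μ'_{dt})/σ'_{dt}) for j = 1, 2 and each (d,t) ∈ {(0,0),(0,1),(1,0)}. Define μ₁₁ = μ₁₀ + (μ₀₁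 − μ₀₀)·σ₁₀/σ₀₀, σ₁₁ = σ₁₀·σ₀₁/σ₀₀, and analogously μ'₁₁, σ'₁₁ from the primed parameters. Then the identified counterfactual category probabilities coincide: F((κ_j − μ₁₁)/σ₁₁) = F((κ'_j − μ'₁₁)/σ'₁₁) for j = 1, 2. -/
open Filter Set

/-- **Lemma A.3, invariance under choice of cutoffs.** Suppose two
parameterizations — cutoffs `κ₁ < κ₂` with parameters `(μ_{dt}, σ_{dt})` and
cutoffs `κ'₁ < κ'₂` with parameters `(μ'_{dt}, σ'_{dt})`, for
`(d,t) ∈ {(0,0),(0,1),(1,0)}` — induce the same observed category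
probabilities. Then the identified counterfactual category probabilities,
formed from `μ₁₁ = μ₁₀ + (μ₀₁ - μ₀₀) * σ₁₀ / σ₀₀`, `σ₁₁ = σ₁₀ * σ₀₁ / σ₀₀`
and their primed analogues, coincide at both cutoffs. -/
theorem counterfactual_invariant_to_cutoffs
    (F : ℝ → ℝ)
    (hFcont : Continuous F)
    (hFmono : StrictMono F)
    (hFbot : Tendsto F atBot (nhds 0))
    (hFtop : Tendsto F atTop (nhds 1))
    (κ₁ κ₂ κ'₁ κ'₂ : ℝ) (hκ : κ₁ < κ₂) (hκ' : κ'₁ < κ'₂)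
    (μ₀₀ μ₀₁ μ₁₀ σ₀₀ σ₀₁ σ₁₀ : ℝ)
    (hσ₀₀ : 0 < σ₀₀) (hσ₀₁ : 0 < σ₀₁) (hσ₁₀ : 0 < σ₁₀)
    (μ'₀₀ μ'₀₁ μ'₁₀ σ'₀₀ σ'₀₁ σ'₁₀ : ℝ)
    (hσ'₀₀ : 0 < σ'₀₀) (hσ'₀₁ : 0 < σ'₀₁) (hσ'₁₀ : 0 < σ'₁₀)
    (h00₁ : F ((κ₁ - μ₀₀) / σ₀₀) = F ((κ'₁ - μ'₀₀) / σ'₀₀))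
    (h00₂ : F ((κ₂ - μ₀₀) / σ₀₀) = F ((κ'₂ - μ'₀₀) / σ'₀₀))
    (h01₁ : F ((κ₁ - μ₀₁) / σ₀₁) = F ((κ'₁ - μ'₀₁) / σ'₀₁))
    (h01₂ : F ((κ₂ - μ₀₁) / σ₀₁) = F ((κ'₂ - μ'₀₁) / σ'₀₁))
    (h10₁ : F ((κ₁ - μ₁₀) / σ₁₀) = F ((κ'₁ - μ'₁₀) / σ'₁₀))
    (h10₂ : F ((κ₂ - μ₁₀) / σ₁₀) = F ((κ'₂ - μ'₁₀) / σ'₁₀))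
    (μ₁₁ σ₁₁ μ'₁₁ σ'₁₁ : ℝ)
    (hμ₁₁ : μ₁₁ = μ₁₀ + (μ₀₁ - μ₀₀) * σ₁₀ / σ₀₀)
    (hσ₁₁ : σ₁₁ = σ₁₀ * σ₀₁ / σ₀₀)
    (hμ'₁₁ : μ'₁₁ = μ'₁₀ + (μ'₀₁ - μ'₀₀) * σ'₁₀ / σ'₀₀)
    (hσ'₁₁ : σ'₁₁ = σ'₁₀ * σ'₀₁ / σ'₀₀) :
    F ((κ₁ - μ₁₁) / σ₁₁) = F ((κ'₁ - μ'₁₁) / σ'₁₁) ∧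
    F ((κ₂ - μ₁₁) / σ₁₁) = F ((κ'₂ - μ'₁₁) / σ'₁₁) := by

  have inj := hFmono.injective
  have e00₁ := inj h00₁
  have e00₂ := inj h00₂
  have e01₁ := inj h01₁
  have e01₂ := inj h01₂
  have e10₁ := inj h10₁
  have e10₂ := inj h10₂
  have hκne : κ₂ - κ₁ ≠ 0 := sub_ne_zero.mpr hκ.ne'
  have hd00 : (κ₂ - κ₁) / σ₀₀ = (κ'₂ - κ'₁) / σ'₀₀ := by
    linear_combination e00₂ - e00₁
  have hd01 : (κ₂ - κ₁) / σ₀₁ = (κ'₂ - κ'₁) / σ'₀₁ := by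
    linear_combination e01₂ - e01₁
  have hr : σ₀₀ / σ₀₁ = σ'₀₀ / σ'₀₁ := by
    rw [div_eq_div_iff hσ₀₀.ne' hσ'₀₀.ne'] at hd00
    rw [div_eq_div_iff hσ₀₁.ne' hσ'₀₁.ne'] at hd01
    rw [div_eq_div_iff hσ₀₁.ne' hσ'₀₁.ne']
    apply mul_left_cancel₀ hκne
    linear_combination σ₀₀ * hd01 - σ₀₁ * hd00
  have hs : (μ₀₁ - μ₀₀) / σ₀₁ = (μ'₀₁ - μ'₀₀) / σ'₀₁ := by
    have h : (μ₀₁ - μ₀₀) / σ₀₁ =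
        (σ₀₀ / σ₀₁) * ((κ₁ - μ₀₀) / σ₀₀) - (κ₁ - μ₀₁) / σ₀₁ := by
      field_simp
      ring
    have h' : (μ'₀₁ - μ'₀₀) / σ'₀₁ =
        (σ'₀₀ / σ'₀₁) * ((κ'₁ - μ'₀₀) / σ'₀₀) - (κ'₁ - μ'₀₁) / σ'₀₁ := by
      field_simp
      ring
    rw [h, h', hr, e00₁, e01₁]
  have g : ∀ κ : ℝ, (κ - μ₁₁) / σ₁₁ =
      (σ₀₀ / σ₀₁) * ((κ - μ₁₀) / σ₁₀) - (μ₀₁ - μ₀₀) / σ₀₁ := by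
    intro κ
    subst hμ₁₁ hσ₁₁
    field_simp
    ring
  have g' : ∀ κ : ℝ, (κ - μ'₁₁) / σ'₁₁ =
      (σ'₀₀ / σ'₀₁) * ((κ - μ'₁₀) / σ'₁₀) - (μ'₀₁ - μ'₀₀) / σ'₀₁ := by
    intro κ
    subst hμ'₁₁ hσ'₁₁
    field_simp
    ring
  constructor
  · rw [g κ₁, g' κ'₁, hr, hs, e10₁]
  · rw [g κ₂, g' κ'₂, hr, hs, e10₂]
end

section
/- (Appendix B counterexample: parallel trends under one dichotomization does not imply parallel trends under another.) There exist four probability vectors on three categories, namely π^{(0)}_{·|1} = (3/10, 5/10, 2/10), π^{(1)}_{·|1} = (2/10, 5/10, 3/10), π^{(0)}_{·|0} = (2/10, 5/10, 3/10), π^{(1)}_{·|0} = (2/10, 4/10, 4/10) — each with nonnegative entries summing to 1 — such that the parallel-trends contrast for the dichotomization at the top category vanishes, [π^{(1)}_{2|1} − π^{(0)}_{2|1}] − [π^{(1)}_{2|0} − π^{(0)}_{2|0}] = 0, while the parallel-trends contrast for the dichotomization at the middle category is nonzero: {[π^{(1)}_{1|1} + π^{(1)}_{2|1}] − [π^{(0)}_{1|1}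 + π^{(0)}_{2|1}]} − {[π^{(1)}_{1|0} + π^{(1)}_{2|0}] − [π^{(0)}_{1|0} + π^{(0)}_{2|0}]} = 1/10. -/
/-- **Appendix B counterexample.** There exist four probability
vectors on three categories (namely `π⁽⁰⁾_{·|1} = (3/10, 5/10, 2/10)`,
`π⁽¹⁾_{·|1} = (2/10, 5/10, 3/10)`, `π⁽⁰⁾_{·|0} = (2/10, 5/10, 3/10)`,
`π⁽¹⁾_{·|0} = (2/10, 4/10, 4/10)`) such that the parallel-trends contrast for
the dichotomization at the top category vanishes while the contrast for the
dichotomization at the middle category equals `1/10`. -/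
theorem dichotomization_parallel_trends_counterexample :
    ∃ π01 π11 π00 π10 : Fin 3 → ℝ,
      π01 = ![3/10, 5/10, 2/10] ∧
      π11 = ![2/10, 5/10, 3/10] ∧
      π00 = ![2/10, 5/10, 3/10] ∧
      π10 = ![2/10, 4/10, 4/10] ∧
      (∀ j, 0 ≤ π01 j) ∧ (∀ j, 0 ≤ π11 j) ∧
      (∀ j, 0 ≤ π00 j) ∧ (∀ j, 0 ≤ π10 j) ∧
      (∑ j, π01 j) = 1 ∧ (∑ j, π11 j) = 1 ∧
      (∑ j, π00 j) = 1 ∧ (∑ j, π10 j) = 1 ∧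
      (π11 2 - π01 2) - (π10 2 - π00 2) = 0 ∧
      ((π11 1 + π11 2) - (π01 1 + π01 2)) - ((π10 1 + π10 2) - (π00 1 + π00 2))
        = 1/10 := by
  refine ⟨_,_,_,_, rfl, rfl, rfl, rfl, ?_, ?_, ?_, ?_, ?_, ?_, ?_, ?_, ?_, ?_⟩ <;>
    first
      | (intro j; fin_cases j <;> norm_num)
      | (simp [Fin.sum_univ_three]; norm_num)
      | norm_num
end
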